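/- arXiv:2311.10442 — 7 statements merged into one kernel-verified Lean document; each statement's English description precedes it below -/
import Mathlib

section
/- Let 1 < r < q < ∞, 0 < ϑ < 1/2, s = (q/r)' = q/(q-r), and u = 1 + C·ϑ where C = (q-r)/(r(q-1)+q(r-1)). Then r' - q'u·((rs(1+ϑ))/(q'u))' ≥ c(q,r)·ϑ for some constant c(q,r) > 0 depending only on q and r. -/
/-!
With `A = rs(1+ϑ)` and `B = q'u` one has `(A/B)' = A/(A-B)`, and clearing denominators collapses
the whole expression to `r(q-r)ϑ(1-ϑ) / ((r-1)(D + ϑE))` with `D = r(q-1)+q(r-1)` and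
`E = q-r+2r(q-1)`. For `ϑ < 1/2` the factor `1-ϑ` is at least `1/2` and the denominator at most
`(r-1)(D + E/2)`, which gives a linear lower bound.
-/

noncomputable def holderConj (x : ℝ) : ℝ := x / (x - 1)

theorem holderConj_div (a : ℝ) {b : ℝ} (hb : b ≠ 0) : holderConj (a / b) = a / (a - b) := by
  unfold holderConj
  rw [div_sub_one hb, div_div_div_cancel_right₀ hb]

theorem holderConj_gap_eq {q r ϑ : ℝ} (hr : 1 < r) (hq : r < q) (hϑ : 0 ≤ ϑ) :
    holderConj r -
        holderConj q * (1 + (q - r) / (r * (q - 1) + q * (r - 1)) * ϑ) *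
          holderConj ((r * (q / (q - r)) * (1 + ϑ)) /
            (holderConj q * (1 + (q - r) / (r * (q - 1) + q * (r - 1)) * ϑ))) =
      r * (q - r) * ϑ * (1 - ϑ) /
        ((r - 1) * (r * (q - 1) + q * (r - 1) + ϑ * (q - r + 2 * r * (q - 1)))) := by
  have hr1 : 0 < r - 1 := by linarith
  have hq1 : 0 < q - 1 := by linarith
  have hqr : 0 < q - r := by linarith
  have hq0 : 0 < q := by linarith
  set D := r * (q - 1) + q * (r - 1) with hD_def
  have hD : 0 < D := by nlinarith
  have hM : 0 < D + ϑ * (q - r + 2 * r * (q - 1)) := by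
    have hE : 0 ≤ q - r + 2 * r * (q - 1) := by nlinarith
    nlinarith
  have hB : holderConj q * (1 + (q - r) / D * ϑ) = q * (D + (q - r) * ϑ) / ((q - 1) * D) := by
    unfold holderConj; field_simp
  have hAB : r * (q / (q - r)) * (1 + ϑ) - q * (D + (q - r) * ϑ) / ((q - 1) * D) =
      q ^ 2 * (r - 1) * (D + ϑ * (q - r + 2 * r * (q - 1))) / ((q - r) * (q - 1) * D) := by
    field_simp
    rw [hD_def]; ring
  have hu : 0 < D + (q - r) * ϑ := by positivity
  rw [hB, holderConj_div _ (by positivity), hAB]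
  unfold holderConj
  field_simp
  rw [hD_def]; ring

/-- Let `1 < r < q < ∞`, `0 < ϑ < 1/2`, `s = (q/r)' = q/(q-r)` and
`u = 1 + Cϑ` with `C = (q-r)/(r(q-1)+q(r-1))`.  Then
`r' - q'u·((rs(1+ϑ))/(q'u))' ≥ c(q,r)·ϑ` for some constant `c(q,r) > 0`
depending only on `q` and `r`. -/
theorem stmt1 (q r : ℝ) (hr : 1 < r) (hq : r < q) :
    ∃ c : ℝ, 0 < c ∧ ∀ ϑ : ℝ, 0 < ϑ → ϑ < 1 / 2 →
      holderConj r -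
        holderConj q * (1 + (q - r) / (r * (q - 1) + q * (r - 1)) * ϑ) *
          holderConj ((r * (q / (q - r)) * (1 + ϑ)) /
            (holderConj q * (1 + (q - r) / (r * (q - 1) + q * (r - 1)) * ϑ)))
        ≥ c * ϑ := by
  have hr1 : 0 < r - 1 := by linarith
  have hqr : 0 < q - r := by linarith
  have hD : 0 < r * (q - 1) + q * (r - 1) := by nlinarith
  have hE : 0 < q - r + 2 * r * (q - 1) := by nlinarith
  refine ⟨r * (q - r) / ((r - 1) * (2 * (r * (q - 1) + q * (r - 1)) + (q - r + 2 * r * (q - 1)))),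
    by positivity, fun ϑ hϑ hϑ2 => ?_⟩
  rw [holderConj_gap_eq hr hq hϑ.le, ge_iff_le]
  set D := r * (q - 1) + q * (r - 1)
  set E := q - r + 2 * r * (q - 1)
  calc r * (q - r) / ((r - 1) * (2 * D + E)) * ϑ
      = r * (q - r) * ϑ * (1 / 2) / ((r - 1) * (D + 1 / 2 * E)) := by
        field_simp
    _ ≤ r * (q - r) * ϑ * (1 - ϑ) / ((r - 1) * (D + ϑ * E)) := by
        have hr0 : 0 < r := by linarith
        have h1ϑ : 0 < 1 - ϑ := by linarith
        gcongr
        linarith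
end

section
/- Let X be a real normed space and let Z ⊆ X* be a norming subspace for X (i.e., ‖x‖ = sup{⟨x,z⟩ : z ∈ Z, ‖z‖ ≤ 1} for all x ∈ X). For any x* ∈ X* with ‖x*‖ ≤ 1, any finite tuple x₁,…,xₙ ∈ X, and any ε > 0, there exists z ∈ Z with ‖z‖ ≤ ‖x*‖ + ε and ⟨xᵢ, z⟩ = ⟨xᵢ, x*⟩ for all i = 1,…,n. -/
set_option maxHeartbeats 1000000
set_option synthInstance.maxHeartbeats 1000000

open NormedSpace

/-- Let `Z ⊆ X*` be a norming subspace for the real normed space `X`.  For any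
`x* ∈ X*` with `‖x*‖ ≤ 1`, any finite tuple `x₁, …, xₙ ∈ X` and any `ε > 0`
there is `z ∈ Z` with `‖z‖ ≤ ‖x*‖ + ε` and `⟨xᵢ, z⟩ = ⟨xᵢ, x*⟩` for all `i`. -/
theorem stmt3 {X : Type*} [NormedAddCommGroup X] [NormedSpace ℝ X]
    (Z : Submodule ℝ (StrongDual ℝ X))
    (hZ : ∀ v : X, ‖v‖ = sSup {t : ℝ | ∃ z ∈ Z, ‖z‖ ≤ 1 ∧ t = z v})
    (x' : StrongDual ℝ X) (hx' : ‖x'‖ ≤ 1)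
    {n : ℕ} (x : Fin n → X) (ε : ℝ) (hε : 0 < ε) :
    ∃ z ∈ Z, ‖z‖ ≤ ‖x'‖ + ε ∧ ∀ i, z (x i) = x' (x i) := by
  classical
  set T : StrongDual ℝ X →ₗ[ℝ] (Fin n → ℝ) :=
    LinearMap.pi (fun i => (ContinuousLinearMap.apply ℝ ℝ (x i)).toLinearMap) with hT
  have hTapp : ∀ (g : StrongDual ℝ X) (i : Fin n), T g i = g (x i) := fun g i => rfl
  set r : ℝ := ‖x'‖ + ε / 2 with hr
  have hrpos : 0 < r := by positivity
  set K : Set (Fin n → ℝ) := T '' ((Z : Set (StrongDual ℝ X)) ∩ Metric.closedBall 0 r) with hK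
  have hKconv : Convex ℝ K :=
    ((Z.convex).inter (convex_closedBall 0 r)).linear_image T
  -- Step 1: `T x'` is in the closure of `K`, by Hahn-Banach separation.
  have hmem : T x' ∈ closure K := by
    by_contra hc
    obtain ⟨f, u, hfu, huf⟩ :=
      geometric_hahn_banach_closed_point hKconv.closure isClosed_closure hc
    have h0K : (0 : Fin n → ℝ) ∈ K :=
      ⟨0, ⟨Z.zero_mem, by simp [hrpos.le]⟩, map_zero T⟩
    have hu0 : 0 < u := by
      have := hfu 0 (subset_closure h0K); simpa using this
    set a : Fin n → ℝ := fun i => f (fun j => if i = j then (1 : ℝ) else 0) with ha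
    have hfy : ∀ y : Fin n → ℝ, f y = ∑ i, y i * a i := by
      intro y
      conv_lhs => rw [pi_eq_sum_univ y]
      rw [map_sum]
      simp [ha, smul_eq_mul]
    set v : X := ∑ i, a i • x i with hv
    have hfv : ∀ g : StrongDual ℝ X, f (T g) = g v := by
      intro g
      rw [hfy]
      simp only [hTapp, hv, map_sum, map_smul, smul_eq_mul]
      exact Finset.sum_congr rfl fun i _ => mul_comm _ _
    have key : ∀ t ∈ {t : ℝ | ∃ z ∈ Z, ‖z‖ ≤ 1 ∧ t = z v}, t ≤ u / r := by
      rintro t ⟨z, hzZ, hz1, rfl⟩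
      have hmemK : T (r • z) ∈ K := by
        refine ⟨r • z, ⟨Z.smul_mem _ hzZ, ?_⟩, rfl⟩
        simp only [Metric.mem_closedBall, dist_zero_right, norm_smul, Real.norm_eq_abs,
          abs_of_pos hrpos]
        nlinarith
      have h1 := hfu _ (subset_closure hmemK)
      rw [hfv] at h1
      simp only [ContinuousLinearMap.coe_smul', Pi.smul_apply, smul_eq_mul] at h1
      rw [le_div_iff₀ hrpos]
      nlinarith
    have hvle : ‖v‖ ≤ u / r := by
      rw [hZ v]
      exact Real.sSup_le key (by positivity)
    have h1 : u < x' v := by rw [← hfv x']; exact huf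
    have h2 : x' v ≤ ‖x'‖ * ‖v‖ :=
      (le_abs_self _).trans (by simpa [Real.norm_eq_abs] using x'.le_opNorm v)
    have h3 : r * ‖v‖ ≤ u := by rw [mul_comm]; exact (le_div_iff₀ hrpos).mp hvle
    have h4 : (‖x'‖ + ε / 2) * ‖v‖ ≤ u := by rw [← hr]; exact h3
    nlinarith [norm_nonneg v]
  -- Step 2: finite-dimensional correction to get exact equality.
  set ZT : ↥Z →ₗ[ℝ] (Fin n → ℝ) := T.comp Z.subtype with hZT
  set V : Submodule ℝ (Fin n → ℝ) := LinearMap.range ZT with hV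
  have hKV : K ⊆ (V : Set (Fin n → ℝ)) := by
    rintro _ ⟨z, ⟨hzZ, _⟩, rfl⟩
    exact ⟨⟨z, hzZ⟩, rfl⟩
  have hVclosed : IsClosed (V : Set (Fin n → ℝ)) := V.closed_of_finiteDimensional
  have hx'V : T x' ∈ V := closure_minimal hKV hVclosed hmem
  obtain ⟨S, hS⟩ := ZT.rangeRestrict.exists_rightInverse_of_surjective
    (LinearMap.range_eq_top.2 ZT.surjective_rangeRestrict)
  have hSZ : ∀ y : ↥V, ZT (S y) = (y : Fin n → ℝ) := by
    intro y
    have h := congrArg (fun g : ↥V →ₗ[ℝ] ↥V => ((g y : ↥V) : Fin n → ℝ)) hS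
    simpa [LinearMap.rangeRestrict, LinearMap.codRestrict_apply] using h
  obtain ⟨C, hC0, hSb⟩ : ∃ C : ℝ, 0 ≤ C ∧ ∀ y : ↥V, ‖S y‖ ≤ C * ‖y‖ := by
    refine ⟨‖LinearMap.toContinuousLinearMap (Z.subtype.comp S)‖, ContinuousLinearMap.opNorm_nonneg _, fun y => ?_⟩
    have h := (LinearMap.toContinuousLinearMap (Z.subtype.comp S)).le_opNorm y
    rwa [show LinearMap.toContinuousLinearMap (Z.subtype.comp S) y = S y from
      congrFun (LinearMap.coe_toContinuousLinearMap' _) y] at h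
  set δ : ℝ := (ε / 2) / (C + 1) with hδ
  have hδpos : 0 < δ := by positivity
  obtain ⟨b, hbK, hbd⟩ := Metric.mem_closure_iff.mp hmem δ hδpos
  obtain ⟨z₁, ⟨hz₁Z, hz₁r⟩, rfl⟩ := hbK
  have hz₁norm : ‖z₁‖ ≤ r := by simpa using hz₁r
  set w : ↥V := ⟨T x' - T z₁, V.sub_mem hx'V ⟨⟨z₁, hz₁Z⟩, rfl⟩⟩ with hw
  have hwnorm : ‖w‖ ≤ δ := by
    have h : ‖T x' - T z₁‖ ≤ δ := by rw [← dist_eq_norm]; exact hbd.le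
    simpa [hw, Submodule.coe_norm] using h
  refine ⟨z₁ + ((S w : ↥Z) : StrongDual ℝ X), Z.add_mem hz₁Z (S w).2, ?_, ?_⟩
  · have h1 : ‖((S w : ↥Z) : StrongDual ℝ X)‖ = ‖S w‖ := (Submodule.coe_norm _).symm
    have h2 : ‖S w‖ ≤ C * ‖w‖ := hSb w
    have h3 : C * ‖w‖ ≤ C * δ := mul_le_mul_of_nonneg_left hwnorm hC0
    have h4 : C * δ ≤ ε / 2 := by
      rw [hδ, mul_div_assoc', div_le_iff₀ (by linarith : (0:ℝ) < C + 1)]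
      nlinarith
    refine le_trans (norm_add_le _ _) ?_
    rw [← Submodule.coe_norm]
    have t1 : ‖S w‖ ≤ ε / 2 := le_trans h2 (le_trans h3 h4)
    have t2 : ‖z₁‖ + ‖S w‖ ≤ r + ε / 2 := add_le_add hz₁norm t1
    rw [hr] at t2
    linarith [t2]
  · intro i
    have h1 : ZT (S w) = (w : Fin n → ℝ) := hSZ w
    have h2 : ZT (S w) i = ((S w : ↥Z) : StrongDual ℝ X) (x i) :=
      hTapp ((S w : ↥Z) : StrongDual ℝ X) i
    have h3 : (w : Fin n → ℝ) i = x' (x i) - z₁ (x i) := by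
      have : (w : Fin n → ℝ) = T x' - T z₁ := rfl
      rw [this]
      simp [hTapp]
    have h4 : ((S w : ↥Z) : StrongDual ℝ X) (x i) = x' (x i) - z₁ (x i) := by
      rw [← h2, h1, h3]
    have h5 : (z₁ + ((S w : ↥Z) : StrongDual ℝ X)) (x i)
        = z₁ (x i) + ((S w : ↥Z) : StrongDual ℝ X) (x i) := rfl
    rw [h5, h4]; ring
end

section
/- Helly's condition: Let E be a normed space over 𝕂, let e₁*, …, eₙ* ∈ E*, c₁, …, cₙ ∈ 𝕂, and M > 0. Then the following are equivalent: (1) for every ε > 0 there exists e ∈ E with ‖e‖ ≤ M + ε and ⟨e, eᵢ*⟩ = cᵢ for all i; (2) |∑ᵢ aᵢcᵢ| ≤ M·‖∑ᵢ aᵢeᵢ*‖ for all scalars a₁, …, aₙ ∈ 𝕂. -/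
open NormedSpace

/-- **Helly's condition.**  Let `E` be a normed space over `𝕜`, `e₁*, …, eₙ* ∈ E*`,
`c₁, …, cₙ ∈ 𝕜` and `M > 0`.  Then the prescribed values `cᵢ` can be realized by
vectors of norm at most `M + ε` for every `ε > 0` iff
`|∑ aᵢ cᵢ| ≤ M ‖∑ aᵢ eᵢ*‖` for all scalars `aᵢ`. -/
theorem stmt4 {𝕜 : Type*} [RCLike 𝕜] {E : Type*} [NormedAddCommGroup E] [NormedSpace 𝕜 E]
    {n : ℕ} (e : Fin n → StrongDual 𝕜 E) (c : Fin n → 𝕜) (M : ℝ) (hM : 0 < M) :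
    (∀ ε : ℝ, 0 < ε → ∃ x : E, ‖x‖ ≤ M + ε ∧ ∀ i, e i x = c i) ↔
      (∀ a : Fin n → 𝕜, ‖∑ i, a i * c i‖ ≤ M * ‖∑ i, a i • e i‖) := by
  constructor
  · -- easy direction
    intro h a
    set S : StrongDual 𝕜 E := ∑ i, a i • e i with hS
    refine le_of_forall_pos_le_add (fun δ hδ => ?_)
    obtain ⟨x, hx, hxe⟩ := h (δ / (‖S‖ + 1)) (by positivity)
    have hval : S x = ∑ i, a i * c i := by
      simp [hS, ContinuousLinearMap.sum_apply, hxe, smul_eq_mul]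
    calc ‖∑ i, a i * c i‖ = ‖S x‖ := by rw [hval]
      _ ≤ ‖S‖ * ‖x‖ := S.le_opNorm x
      _ ≤ ‖S‖ * (M + δ / (‖S‖ + 1)) := by
          exact mul_le_mul_of_nonneg_left hx (norm_nonneg _)
      _ = M * ‖S‖ + ‖S‖ * (δ / (‖S‖ + 1)) := by ring
      _ ≤ M * ‖S‖ + δ := by
          have hb : ‖S‖ * (δ / (‖S‖ + 1)) ≤ δ := by
            rw [mul_div_assoc', div_le_iff₀ (by positivity)]
            nlinarith [norm_nonneg S]
          linarith
  · -- hard direction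
    intro h2 ε hε
    -- Step 1: find `x₀` with `e i x₀ = c i`.
    set T : E →ₗ[𝕜] (Fin n → 𝕜) := LinearMap.pi (fun i => (e i : E →ₗ[𝕜] 𝕜)) with hT
    have hc : c ∈ LinearMap.range T := by
      by_contra hc
      have hv : (LinearMap.range T).mkQ c ≠ 0 := by
        simpa [Submodule.Quotient.mk_eq_zero] using hc
      have hnall : ¬ ∀ φ : Module.Dual 𝕜 ((Fin n → 𝕜) ⧸ LinearMap.range T),
          φ ((LinearMap.range T).mkQ c) = 0 := by
        rw [Module.forall_dual_apply_eq_zero_iff]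
        exact hv
      obtain ⟨φ, hφ⟩ := not_forall.1 hnall
      set ψ : (Fin n → 𝕜) →ₗ[𝕜] 𝕜 := φ.comp (LinearMap.range T).mkQ with hψ
      have hψT : ∀ x : E, ψ (T x) = 0 := by
        intro x
        have : T x ∈ LinearMap.range T := ⟨x, rfl⟩
        simp [hψ, (Submodule.Quotient.mk_eq_zero _).2 this]
      set a : Fin n → 𝕜 := fun i => ψ (fun j => if i = j then 1 else 0) with ha
      have hsum : (∑ i, a i • e i) = 0 := by
        ext x
        have := hψT x
        rw [LinearMap.pi_apply_eq_sum_univ ψ (T x)] at this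
        simpa [ha, hT, smul_eq_mul, mul_comm] using this
      have hle := h2 a
      rw [hsum, norm_zero, mul_zero, norm_le_zero_iff] at hle
      have hcψ : ψ c = ∑ i, a i * c i := by
        rw [LinearMap.pi_apply_eq_sum_univ ψ c]
        simp [ha, smul_eq_mul, mul_comm]
      apply hφ
      have hrfl : φ ((LinearMap.range T).mkQ c) = ψ c := rfl
      rw [hrfl, hcψ, hle]
    obtain ⟨x₀, hx₀⟩ := hc
    have hx₀i : ∀ i, e i x₀ = c i := fun i => congrFun hx₀ i
    -- Step 2: the quotient by `N = ⋂ ker (e i)`.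
    set N : Submodule 𝕜 E := ⨅ i, LinearMap.ker (e i : E →ₗ[𝕜] 𝕜) with hN
    haveI : IsClosed (N : Set E) := by
      have : (N : Set E) = ⋂ i, (LinearMap.ker (e i : E →ₗ[𝕜] 𝕜) : Set E) := by
        simp [hN, Submodule.coe_iInf]
      rw [this]
      exact isClosed_iInter (fun i => ContinuousLinearMap.isClosed_ker (e i))
    set π : E →L[𝕜] (E ⧸ N) := ⟨N.mkQ, continuous_quot_mk⟩ with hπ
    have hπle : ∀ x : E, ‖π x‖ ≤ ‖x‖ := fun x => Submodule.Quotient.norm_mk_le N x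
    -- key bound : ‖π x₀‖ ≤ M
    have hd : ‖π x₀‖ ≤ M := by
      by_cases h0 : π x₀ = 0
      · rw [h0, norm_zero]; exact hM.le
      · obtain ⟨g, hg1, hgx⟩ := exists_dual_vector 𝕜 (π x₀) (norm_ne_zero_iff.mpr h0)
        set f : E →L[𝕜] 𝕜 := g.comp π with hf
        have hfnorm : ‖f‖ ≤ 1 := by
          refine f.opNorm_le_bound zero_le_one (fun x => ?_)
          calc ‖f x‖ ≤ ‖g‖ * ‖π x‖ := g.le_opNorm _
            _ ≤ 1 * ‖x‖ := by rw [hg1]; simpa using hπle x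
        have hker : (⨅ i, LinearMap.ker ((e i : E →ₗ[𝕜] 𝕜))) ≤ LinearMap.ker (f : E →ₗ[𝕜] 𝕜) := by
          intro x hx
          have hxN : x ∈ N := by
            rw [hN, Submodule.mem_iInf]
            intro i
            exact (Submodule.mem_iInf _).1 hx i
          have hπx : π x = 0 := (Submodule.Quotient.mk_eq_zero N).2 hxN
          have hfx0 : f x = 0 := by rw [hf, ContinuousLinearMap.comp_apply, hπx, map_zero]
          exact LinearMap.mem_ker.2 hfx0
        have hmem := mem_span_of_iInf_ker_le_ker hker
        obtain ⟨a, haf⟩ := (Submodule.mem_span_range_iff_exists_fun 𝕜).1 hmem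
        have hfa : (∑ i, a i • e i) = f := by
          ext x
          have := congrFun (congrArg (fun (φ : E →ₗ[𝕜] 𝕜) => φ.toFun) haf) x
          simpa [ContinuousLinearMap.sum_apply] using this
        have hfx₀ : f x₀ = ∑ i, a i * c i := by
          rw [← hfa]
          simp [ContinuousLinearMap.sum_apply, hx₀i, smul_eq_mul]
        have : ‖π x₀‖ = ‖∑ i, a i * c i‖ := by
          rw [← hfx₀]
          have : f x₀ = (‖π x₀‖ : 𝕜) := by rw [hf]; simpa using hgx
          rw [this, RCLike.norm_ofReal, abs_of_nonneg (norm_nonneg _)]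
        rw [this]
        calc ‖∑ i, a i * c i‖ ≤ M * ‖∑ i, a i • e i‖ := h2 a
          _ = M * ‖f‖ := by rw [hfa]
          _ ≤ M * 1 := by gcongr
          _ = M := mul_one M
    -- Step 3: choose a good representative.
    obtain ⟨m, hm, hmn⟩ := Submodule.Quotient.norm_mk_lt (π x₀) hε
    refine ⟨m, ?_, ?_⟩
    · have : ‖m‖ < M + ε := lt_of_lt_of_le hmn (by linarith)
      exact this.le
    · intro i
      have hdiff : m - x₀ ∈ N := by
        have hm' : (Submodule.Quotient.mk m : E ⧸ N) = Submodule.Quotient.mk x₀ := hm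
        exact (Submodule.Quotient.eq N).1 hm' 
      have : e i (m - x₀) = 0 := by
        have := (Submodule.mem_iInf _).1 hdiff i
        simpa using this
      have hmx : e i m = e i x₀ := sub_eq_zero.1 (by rw [← map_sub]; exact this)
      rw [hmx, hx₀i]
end

section
/- Cordes inequality: Let A and B be self-adjoint positive definite n×n real matrices and 0 < α < 1. Then ‖A^α B^α‖_op ≤ ‖AB‖_op^α, where A^α denotes the positive-definite power and ‖·‖_op the operator norm. -/
open Matrix

/-- The positive-definite power `A^α` of a Hermitian positive definite matrix,
defined via the spectral decomposition (functional calculus). -/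
noncomputable def matRpow {n : ℕ} {A : Matrix (Fin n) (Fin n) ℝ}
    (hA : A.IsHermitian) (α : ℝ) : Matrix (Fin n) (Fin n) ℝ :=
  hA.cfc fun x => x ^ α

open scoped Matrix.Norms.L2Operator

namespace Cordes
variable {n : ℕ} {A B M : Matrix (Fin n) (Fin n) ℝ}

lemma matRpow_eq (hA : A.IsHermitian) (α : ℝ) :
    matRpow hA α = cfc (fun x : ℝ => x ^ α) A := (hA.cfc_eq _).symm

lemma matRpow_isHermitian (hA : A.IsHermitian) (α : ℝ) : (matRpow hA α).IsHermitian := by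
  rw [matRpow_eq]
  exact cfc_predicate (fun x : ℝ => x ^ α) A

lemma spectrum_pos (hA : A.PosDef) : ∀ x ∈ spectrum ℝ A, 0 < x := by
  intro x hx
  rw [hA.1.spectrum_real_eq_range_eigenvalues] at hx
  obtain ⟨i, rfl⟩ := hx
  exact hA.eigenvalues_pos i

lemma contOn (hA : A.PosDef) (σ : ℝ) :
    ContinuousOn (fun x : ℝ => x ^ σ) (spectrum ℝ A) := fun x hx =>
  (Real.continuousAt_rpow_const x σ (Or.inl (spectrum_pos hA x hx).ne')).continuousWithinAt

lemma matRpow_mul (hA : A.PosDef) (σ τ : ℝ) :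
    matRpow hA.1 σ * matRpow hA.1 τ = matRpow hA.1 (σ + τ) := by
  rw [matRpow_eq, matRpow_eq, matRpow_eq, ← cfc_mul _ _ A (contOn hA σ) (contOn hA τ)]
  exact cfc_congr fun x hx => (Real.rpow_add (spectrum_pos hA x hx) σ τ).symm

lemma matRpow_zero (hA : A.PosDef) : matRpow hA.1 0 = 1 := by
  rw [matRpow_eq]
  calc cfc (fun x : ℝ => x ^ (0:ℝ)) A = cfc (fun _ : ℝ => (1:ℝ)) A :=
        cfc_congr fun x hx => Real.rpow_zero x
    _ = 1 := cfc_one ℝ A hA.1.isSelfAdjoint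

lemma matRpow_one (hA : A.PosDef) : matRpow hA.1 1 = A := by
  rw [matRpow_eq]
  calc cfc (fun x : ℝ => x ^ (1:ℝ)) A = cfc (fun x : ℝ => x) A :=
        cfc_congr fun x hx => Real.rpow_one x
    _ = A := cfc_id ℝ A hA.1.isSelfAdjoint

lemma norm_diagonal_le (d : Fin n → ℝ) (c : ℝ) (hc : 0 ≤ c) (h : ∀ i, |d i| ≤ c) :
    ‖(diagonal d : Matrix (Fin n) (Fin n) ℝ)‖ ≤ c := by
  rw [Matrix.l2_opNorm_def]
  refine ContinuousLinearMap.opNorm_le_bound _ hc fun x => ?_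
  have hx : ∀ (y : EuclideanSpace ℝ (Fin n)), ‖y‖ = Real.sqrt (∑ i, ‖y i‖ ^ 2) := fun y =>
    EuclideanSpace.norm_eq y
  show ‖toEuclideanLin (diagonal d) x‖ ≤ c * ‖x‖
  rw [hx, hx]
  rw [← Real.sqrt_sq hc, ← Real.sqrt_mul (by positivity)]
  apply Real.sqrt_le_sqrt
  rw [Finset.mul_sum]
  apply Finset.sum_le_sum
  intro i _
  have : (toEuclideanLin (diagonal d) x) i = d i * x i := by
    rw [toEuclideanLin_apply]
    show (diagonal d *ᵥ _) i = _
    rw [mulVec_diagonal]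
  rw [this]
  simp only [Real.norm_eq_abs, abs_mul]
  rw [mul_pow]
  exact mul_le_mul_of_nonneg_right (pow_le_pow_left₀ (abs_nonneg _) (h i) 2) (by positivity)

lemma norm_hermitian_le (hM : M.IsHermitian) (c : ℝ) (hc : 0 ≤ c)
    (h : ∀ i, |hM.eigenvalues i| ≤ c) : ‖M‖ ≤ c := by
  conv_lhs => rw [hM.spectral_theorem, Unitary.conjStarAlgAut_apply]
  rw [CStarRing.norm_mul_mem_unitary _ (Unitary.star_mem (hM.eigenvectorUnitary).2),
    CStarRing.norm_mem_unitary_mul _ (hM.eigenvectorUnitary).2]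
  exact norm_diagonal_le _ c hc h

lemma eigenvalue_le_norm {μ : ℝ} {v : Fin n → ℝ} (hv : v ≠ 0) (h : M *ᵥ v = μ • v) :
    |μ| ≤ ‖M‖ := by
  set x : EuclideanSpace ℝ (Fin n) := (WithLp.equiv 2 _).symm v with hxdef
  have hx : x ≠ 0 := by simpa [hxdef] using hv
  have hnx : 0 < ‖x‖ := norm_pos_iff.mpr hx
  have key : ‖(EuclideanSpace.equiv (Fin n) ℝ).symm (M *ᵥ v)‖ ≤ ‖M‖ * ‖x‖ :=
    M.l2_opNorm_mulVec x
  rw [h] at key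
  have hsmul : (EuclideanSpace.equiv (Fin n) ℝ).symm (μ • v) = μ • x := rfl
  rw [hsmul, norm_smul] at key
  simp only [Real.norm_eq_abs] at key
  exact le_of_mul_le_mul_right key hnx

lemma eigenvalue_conj {μ : ℝ} {v : Fin n → ℝ} {P Q : Matrix (Fin n) (Fin n) ℝ}
    (hQP : Q * P = 1) (hv : v ≠ 0) (h : M *ᵥ v = μ • v) :
    P *ᵥ v ≠ 0 ∧ (P * M * Q) *ᵥ (P *ᵥ v) = μ • (P *ᵥ v) := by
  constructor
  · intro h0
    apply hv
    have : v = Q *ᵥ (P *ᵥ v) := by rw [mulVec_mulVec, hQP, one_mulVec]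
    rw [this, h0, mulVec_zero]
  · rw [mulVec_mulVec, mul_assoc (P * M) Q P, hQP, mul_one, ← mulVec_mulVec, h,
      mulVec_smul]

section Main
variable (hA : A.PosDef) (hB : B.PosDef)

/-- The main quantity. -/
noncomputable def f (hA : A.PosDef) (hB : B.PosDef) (t : ℝ) : ℝ :=
  ‖matRpow hA.1 t * matRpow hB.1 t‖

lemma f_nonneg (t : ℝ) : 0 ≤ f hA hB t := norm_nonneg _

lemma key (hn : 0 < n) (σ τ : ℝ) :
    f hA hB ((σ + τ) / 2) ^ 2 ≤ f hA hB σ * f hA hB τ := by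
  have : Nonempty (Fin n) := Fin.pos_iff_nonempty.mp hn
  set a : ℝ → Matrix (Fin n) (Fin n) ℝ := fun t => matRpow hA.1 t with ha_def
  set b : ℝ → Matrix (Fin n) (Fin n) ℝ := fun t => matRpow hB.1 t with hb_def
  have ha : ∀ x y z : ℝ, x + y = z → a x * a y = a z := fun x y z h => by
    rw [ha_def]; simp only []; rw [matRpow_mul hA x y, h]
  have hb : ∀ x y z : ℝ, x + y = z → b x * b y = b z := fun x y z h => by
    rw [hb_def]; simp only []; rw [matRpow_mul hB x y, h]
  have ha0 : a 0 = 1 := matRpow_zero hA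
  have hb0 : b 0 = 1 := matRpow_zero hB
  have haH : ∀ x, (a x).IsHermitian := fun x => matRpow_isHermitian hA.1 x
  have hbH : ∀ x, (b x).IsHermitian := fun x => matRpow_isHermitian hB.1 x
  set m : ℝ := (σ + τ) / 2 with hm_def
  set C : Matrix (Fin n) (Fin n) ℝ := b m * (a m * a m) * b m with hC_def
  -- the square is the norm of C
  have hsq : f hA hB m ^ 2 = ‖C‖ := by
    have h1 : f hA hB m * f hA hB m = ‖(a m * b m)ᴴ * (a m * b m)‖ :=
      (l2_opNorm_conjTranspose_mul_self (a m * b m)).symm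
    have h2 : (a m * b m)ᴴ * (a m * b m) = C := by
      rw [conjTranspose_mul, (haH m), (hbH m), hC_def]
      simp only [mul_assoc]
    rw [sq, h1, h2]
  -- C is Hermitian
  have hCH : C.IsHermitian := by
    rw [hC_def]
    show (b m * (a m * a m) * b m)ᴴ = _
    simp only [conjTranspose_mul, mul_assoc]
    rw [(haH m).eq, (hbH m).eq]
  -- pick the max eigenvalue
  obtain ⟨i, hi⟩ := Finset.exists_max_image Finset.univ (fun i => |hCH.eigenvalues i|)
    ⟨Classical.arbitrary (Fin n), Finset.mem_univ _⟩
  have hCle : ‖C‖ ≤ |hCH.eigenvalues i| :=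
    norm_hermitian_le hCH _ (abs_nonneg _) (fun j => hi.2 j (Finset.mem_univ j))
  -- eigenvector
  set v : Fin n → ℝ := ⇑(hCH.eigenvectorBasis i) with hv_def
  have hv : C *ᵥ v = hCH.eigenvalues i • v := hCH.mulVec_eigenvectorBasis i
  have hv0 : v ≠ 0 := by
    intro h0
    have : (hCH.eigenvectorBasis i : EuclideanSpace ℝ (Fin n)) = 0 := by
      apply PiLp.ext
      intro j
      exact congrFun h0 j
    exact hCH.eigenvectorBasis.orthonormal.ne_zero i this
  -- conjugate
  set P : Matrix (Fin n) (Fin n) ℝ := a σ * b m with hP_def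
  set Q : Matrix (Fin n) (Fin n) ℝ := b (-m) * a (-σ) with hQ_def
  have hQP : Q * P = 1 := by
    rw [hQ_def, hP_def, mul_assoc, ← mul_assoc (a (-σ)), ha (-σ) σ 0 (by ring),
      ha0, one_mul, hb (-m) m 0 (by ring), hb0]
  obtain ⟨hw0, hw⟩ := eigenvalue_conj hQP hv0 hv
  have hident : P * C * Q = (a σ * b σ) * (b τ * a τ) := by
    rw [hP_def, hC_def, hQ_def]
    simp only [mul_assoc]
    rw [show b m * (b (-m) * a (-σ)) = a (-σ) by
      rw [← mul_assoc, hb m (-m) 0 (by ring), hb0, one_mul]]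
    rw [show a m * (a m * a (-σ)) = a τ by
      rw [← mul_assoc, ha m m (σ + τ) (by rw [hm_def]; ring),
        ha (σ + τ) (-σ) τ (by ring)]]
    rw [← mul_assoc (b m) (b m), hb m m (σ + τ) (by rw [hm_def]; ring),
      ← mul_assoc (b σ) (b τ), hb σ τ (σ + τ) rfl]
  have hμ : |hCH.eigenvalues i| ≤ ‖(a σ * b σ) * (b τ * a τ)‖ := by
    rw [← hident]
    exact eigenvalue_le_norm hw0 hw
  have hbound : ‖(a σ * b σ) * (b τ * a τ)‖ ≤ f hA hB σ * f hA hB τ := by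
    refine le_trans (l2_opNorm_mul _ _) ?_
    have : ‖b τ * a τ‖ = f hA hB τ := by
      rw [show b τ * a τ = (a τ * b τ)ᴴ by rw [conjTranspose_mul, (haH τ), (hbH τ)],
        l2_opNorm_conjTranspose]
      rfl
    rw [this]
    rfl
  calc f hA hB m ^ 2 = ‖C‖ := hsq
    _ ≤ |hCH.eigenvalues i| := hCle
    _ ≤ ‖(a σ * b σ) * (b τ * a τ)‖ := hμ
    _ ≤ f hA hB σ * f hA hB τ := hbound

lemma f_zero (hn : 0 < n) : f hA hB 0 = 1 := by
  have : Nontrivial (Matrix (Fin n) (Fin n) ℝ) := by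
    have : Nonempty (Fin n) := Fin.pos_iff_nonempty.mp hn
    infer_instance
  rw [f, matRpow_zero hA, matRpow_zero hB, one_mul, CStarRing.norm_one]

lemma f_one : f hA hB 1 = ‖A * B‖ := by rw [f, matRpow_one hA, matRpow_one hB]

lemma f_one_pos (hn : 0 < n) : 0 < f hA hB 1 := by
  have : Nonempty (Fin n) := Fin.pos_iff_nonempty.mp hn
  rw [f_one]
  rw [norm_pos_iff]
  intro h
  have hdet : (A * B).det = 0 := by rw [h, Matrix.det_zero]
  rw [Matrix.det_mul] at hdet
  exact (mul_pos hA.det_pos hB.det_pos).ne' hdet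

lemma dyadic (hn : 0 < n) : ∀ k : ℕ, ∀ m : ℕ, m ≤ 2 ^ k →
    f hA hB ((m : ℝ) / 2 ^ k) ≤ (f hA hB 1) ^ ((m : ℝ) / 2 ^ k) := by
  have hf1 : 0 < f hA hB 1 := f_one_pos hA hB hn
  intro k
  induction k with
  | zero =>
    intro m hm
    interval_cases m
    · simpa [Real.rpow_zero] using (f_zero hA hB hn).le
    · simp [Real.rpow_one]
  | succ k ih =>
    intro m hm
    set K : ℕ := 2 ^ k with hK
    have hm' : m ≤ 2 * K := by
      have h2 : (2:ℕ) ^ (k+1) = 2 * 2 ^ k := by ring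
      omega
    set p : ℕ := m / 2 with hp_def
    set q : ℕ := m - p with hq_def
    have hp : p ≤ K := by omega
    have hq : q ≤ K := by omega
    have hpq : p + q = m := by omega
    have hpq' : (p : ℝ) + (q : ℝ) = (m : ℝ) := by exact_mod_cast congrArg (Nat.cast : ℕ → ℝ) hpq
    have hsum : (p : ℝ) / 2 ^ k + (q : ℝ) / 2 ^ k = (m : ℝ) / 2 ^ k := by
      rw [← add_div, hpq']
    have hx : (m : ℝ) / 2 ^ (k+1) = ((p : ℝ) / 2 ^ k + (q : ℝ) / 2 ^ k) / 2 := by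
      rw [hsum, pow_succ, ← div_div]
    have h2 := key hA hB hn ((p : ℝ) / 2 ^ k) ((q : ℝ) / 2 ^ k)
    have h3 : f hA hB ((m : ℝ) / 2 ^ (k+1)) ^ 2 ≤
        f hA hB 1 ^ ((p : ℝ) / 2 ^ k) * f hA hB 1 ^ ((q : ℝ) / 2 ^ k) := by
      rw [hx]
      exact h2.trans (mul_le_mul (ih p hp) (ih q hq) (f_nonneg hA hB _)
        (Real.rpow_nonneg hf1.le _))
    have h4 : f hA hB 1 ^ ((p : ℝ) / 2 ^ k) * f hA hB 1 ^ ((q : ℝ) / 2 ^ k)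
        = (f hA hB 1 ^ ((m : ℝ) / 2 ^ (k+1))) ^ 2 := by
      rw [← Real.rpow_add hf1, hsum, sq, ← Real.rpow_add hf1]
      congr 1
      rw [pow_succ]
      field_simp
      ring
    rw [h4] at h3
    exact (pow_le_pow_iff_left₀ (f_nonneg hA hB _) (Real.rpow_nonneg hf1.le _)
      (by norm_num)).mp h3

lemma matRpow_continuous : Continuous fun t => matRpow hA.1 t := by
  show Continuous fun t : ℝ => (hA.1.eigenvectorUnitary : Matrix (Fin n) (Fin n) ℝ) *
    diagonal (RCLike.ofReal ∘ (fun x : ℝ => x ^ t) ∘ hA.1.eigenvalues) *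
    star (hA.1.eigenvectorUnitary : Matrix (Fin n) (Fin n) ℝ)
  refine Continuous.matrix_mul (Continuous.matrix_mul continuous_const ?_) continuous_const
  refine Continuous.matrix_diagonal ?_
  refine continuous_pi fun i => ?_
  have h1 : Continuous fun t : ℝ => (hA.1.eigenvalues i) ^ t :=
    continuous_iff_continuousAt.mpr fun b =>
      Real.continuousAt_const_rpow (hA.eigenvalues_pos i).ne'
  exact (RCLike.continuous_ofReal).comp h1

lemma f_continuous : Continuous (f hA hB) :=
  (((matRpow_continuous hA).matrix_mul (matRpow_continuous hB))).norm

end Main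
end Cordes

open Cordes

/-- **Cordes inequality.**  For self-adjoint positive definite real `n×n` matrices
`A`, `B` and `0 < α < 1`, `‖A^α B^α‖_op ≤ ‖AB‖_op^α`. -/
theorem stmt5 {n : ℕ} (A B : Matrix (Fin n) (Fin n) ℝ)
    (hA : A.PosDef) (hB : B.PosDef) (α : ℝ) (hα0 : 0 < α) (hα1 : α < 1) :
    ‖toEuclideanCLM (𝕜 := ℝ) (matRpow hA.1 α * matRpow hB.1 α)‖ ≤
      ‖toEuclideanCLM (𝕜 := ℝ) (A * B)‖ ^ α := by
  rcases Nat.eq_zero_or_pos n with hn | hn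
  · subst hn
    have h1 : Subsingleton (EuclideanSpace ℝ (Fin 0) →L[ℝ] EuclideanSpace ℝ (Fin 0)) := by
      infer_instance
    rw [Subsingleton.elim (toEuclideanCLM (𝕜 := ℝ) (matRpow hA.1 α * matRpow hB.1 α)) 0,
      Subsingleton.elim (toEuclideanCLM (𝕜 := ℝ) (A * B)) 0, norm_zero,
      Real.zero_rpow hα0.ne']
  · -- n > 0
    have hf1 : 0 < f hA hB 1 := f_one_pos hA hB hn
    have hgoal : f hA hB α ≤ f hA hB 1 ^ α := by
      -- dyadic approximation
      set x : ℕ → ℝ := fun k => (⌈α * 2 ^ k⌉₊ : ℝ) / 2 ^ k with hx_def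
      have hxk : ∀ k, f hA hB (x k) ≤ f hA hB 1 ^ (x k) := by
        intro k
        apply dyadic hA hB hn k
        rw [Nat.ceil_le]
        calc α * 2 ^ k ≤ 1 * 2 ^ k := by
              apply mul_le_mul_of_nonneg_right hα1.le (by positivity)
          _ = ((2 ^ k : ℕ) : ℝ) := by push_cast; ring
      have hge : ∀ k, α ≤ x k := by
        intro k
        rw [hx_def]
        rw [le_div_iff₀ (by positivity)]
        exact Nat.le_ceil _
      have hle : ∀ k, x k ≤ α + (1 / 2) ^ k := by
        intro k
        rw [hx_def]
        rw [div_le_iff₀ (by positivity)]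
        have := Nat.ceil_lt_add_one (a := α * 2 ^ k) (by positivity)
        calc (⌈α * 2 ^ k⌉₊ : ℝ) ≤ α * 2 ^ k + 1 := this.le
          _ = (α + (1 / 2) ^ k) * 2 ^ k := by
              field_simp
              rw [mul_add, ← mul_pow, show (2:ℝ) * (1 / 2) = 1 by norm_num, one_pow]
              ring
      have htend : Filter.Tendsto x Filter.atTop (nhds α) := by
        have h1 : Filter.Tendsto (fun k : ℕ => α + (1 / 2 : ℝ) ^ k) Filter.atTop (nhds (α + 0)) :=
          Filter.Tendsto.const_add α
            (tendsto_pow_atTop_nhds_zero_of_lt_one (by norm_num) (by norm_num))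
        rw [add_zero] at h1
        exact tendsto_of_tendsto_of_tendsto_of_le_of_le tendsto_const_nhds h1 hge hle
      have hfx : Filter.Tendsto (fun k => f hA hB (x k)) Filter.atTop (nhds (f hA hB α)) :=
        ((f_continuous hA hB).continuousAt.tendsto).comp htend
      have hgx : Filter.Tendsto (fun k => f hA hB 1 ^ (x k)) Filter.atTop
          (nhds (f hA hB 1 ^ α)) :=
        ((Real.continuousAt_const_rpow hf1.ne').tendsto).comp htend
      exact le_of_tendsto_of_tendsto' hfx hgx hxk
    calc ‖toEuclideanCLM (𝕜 := ℝ) (matRpow hA.1 α * matRpow hB.1 α)‖ = f hA hB α := rfl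
      _ ≤ f hA hB 1 ^ α := hgoal
      _ = ‖toEuclideanCLM (𝕜 := ℝ) (A * B)‖ ^ α := by rw [f_one]; rfl
end

section
/- Let X be a real normed space, Z ⊆ X* a norming subspace, and x = (x₁,…,xₙ) ∈ Xⁿ. Then the convex body ⟪x⟫_X = {⟨x, x*⟩ : x* ∈ closed unit ball of X*} equals ⋂_{ε>0} (1+ε)·{⟨x, z⟩ : z ∈ Z, ‖z‖ ≤ 1}, where ⟨x, φ⟩ = (⟨x₁,φ⟩,…,⟨xₙ,φ⟩) ∈ ℝⁿ. -/
open NormedSpace Pointwise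

/-- The convex body `⟪x⟫_X ⊆ ℝⁿ` of a tuple `x ∈ Xⁿ`. -/
def convexBody {X : Type*} [NormedAddCommGroup X] [NormedSpace ℝ X] {n : ℕ}
    (x : Fin n → X) : Set (Fin n → ℝ) :=
  {v | ∃ φ : StrongDual ℝ X, ‖φ‖ ≤ 1 ∧ v = fun i => φ (x i)}

/-- If `Z ⊆ X*` is a norming subspace, then the convex body of `x ∈ Xⁿ` equals
`⋂_{ε>0} (1+ε)·{⟨x,z⟩ : z ∈ Z, ‖z‖ ≤ 1}`. -/
theorem stmt7 {X : Type*} [NormedAddCommGroup X] [NormedSpace ℝ X]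
    (Z : Submodule ℝ (StrongDual ℝ X))
    (hZ : ∀ v : X, ‖v‖ = sSup {t : ℝ | ∃ z ∈ Z, ‖z‖ ≤ 1 ∧ t = z v})
    {n : ℕ} (x : Fin n → X) :
    convexBody x =
      ⋂ ε ∈ Set.Ioi (0 : ℝ),
        (1 + ε) • {v : Fin n → ℝ | ∃ z ∈ Z, ‖z‖ ≤ 1 ∧ v = fun i => z (x i)} := by
  classical
  set S : Set (Fin n → ℝ) := {v : Fin n → ℝ | ∃ z ∈ Z, ‖z‖ ≤ 1 ∧ v = fun i => z (x i)}
    with hSdef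
  -- basic facts about S
  have h0S : (0 : Fin n → ℝ) ∈ S := ⟨0, Z.zero_mem, by simp, by ext i; simp⟩
  have hSconv : Convex ℝ S := by
    rintro v₁ ⟨z₁, hz₁, hn₁, rfl⟩ v₂ ⟨z₂, hz₂, hn₂, rfl⟩ a b ha hb hab
    refine ⟨a • z₁ + b • z₂, Z.add_mem (Z.smul_mem a hz₁) (Z.smul_mem b hz₂), ?_, ?_⟩
    · calc ‖a • z₁ + b • z₂‖ ≤ ‖a • z₁‖ + ‖b • z₂‖ := norm_add_le _ _
        _ ≤ a * 1 + b * 1 := by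
            rw [norm_smul, norm_smul, Real.norm_eq_abs, Real.norm_eq_abs,
              abs_of_nonneg ha, abs_of_nonneg hb]
            gcongr
        _ = 1 := by linarith
    · ext i; simp [mul_comm]
  have hSsymm : ∀ v ∈ S, -v ∈ S := by
    rintro v ⟨z, hz, hn, rfl⟩
    exact ⟨-z, Z.neg_mem hz, by simpa using hn, by ext i; simp⟩
  have hSK : S ⊆ convexBody x := by
    rintro v ⟨z, hz, hn, rfl⟩; exact ⟨z, hn, rfl⟩
  -- bound: any functional of norm ≤ 1 evaluates ≤ ‖u‖
  have hbound : ∀ (ψ : StrongDual ℝ X), ‖ψ‖ ≤ 1 → ∀ u : X, ψ u ≤ ‖u‖ := by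
    intro ψ hψ u
    calc ψ u ≤ |ψ u| := le_abs_self _
      _ = ‖ψ u‖ := (Real.norm_eq_abs _).symm
      _ ≤ ‖ψ‖ * ‖u‖ := ψ.le_opNorm u
      _ ≤ 1 * ‖u‖ := by gcongr
      _ = ‖u‖ := one_mul _
  -- K ⊆ closure S
  have hKsubcl : convexBody x ⊆ closure S := by
    rintro v ⟨φ, hφ, rfl⟩
    by_contra hv
    obtain ⟨f, u, hfs, hfv⟩ :=
      geometric_hahn_banach_closed_point (hSconv.closure) isClosed_closure hv
    -- f as a sum
    have hf : ∀ w : Fin n → ℝ,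
        f w = ∑ i, w i * f (fun j => if i = j then 1 else 0) := by
      intro w
      conv_lhs => rw [pi_eq_sum_univ w]
      rw [map_sum]
      simp [smul_eq_mul]
    set u₀ : X := ∑ i, f (fun j => if i = j then 1 else 0) • x i with hu₀
    have hzeval : ∀ ψ : StrongDual ℝ X, f (fun i => ψ (x i)) = ψ u₀ := by
      intro ψ
      rw [hf, hu₀, map_sum]
      simp [mul_comm]
    have hub : ‖u₀‖ ≤ u := by
      rw [hZ u₀]
      have h0u : (0 : ℝ) < u := by
        have := hfs 0 (subset_closure h0S)
        simpa using this
      refine Real.sSup_le ?_ h0u.le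
      rintro t ⟨z, hz, hn, rfl⟩
      have : f (fun i => z (x i)) < u :=
        hfs _ (subset_closure ⟨z, hz, hn, rfl⟩)
      rw [hzeval] at this
      exact this.le
    have : u < u := by
      calc u < f (fun i => φ (x i)) := hfv
        _ = φ u₀ := hzeval φ
        _ ≤ ‖u₀‖ := hbound φ hφ u₀
        _ ≤ u := hub
    exact absurd this (lt_irrefl u)
  -- K is closed (Banach–Alaoglu)
  have hKclosed : IsClosed (convexBody x) := by
    have himg : convexBody x =
        (fun φ : WeakDual ℝ X => fun i => φ (x i)) ''
          (WeakDual.toStrongDual ⁻¹' Metric.closedBall 0 1) := by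
      ext v
      constructor
      · rintro ⟨φ, hφ, rfl⟩
        exact ⟨φ, mem_closedBall_zero_iff.mpr hφ, rfl⟩
      · rintro ⟨φ, hφ, rfl⟩
        exact ⟨φ, by rw [Set.mem_preimage, Metric.mem_closedBall, dist_zero_right] at hφ; exact hφ, rfl⟩
    rw [himg]
    have hcomp : IsCompact ((fun φ : WeakDual ℝ X => fun i => φ (x i)) ''
        (WeakDual.toStrongDual ⁻¹' Metric.closedBall 0 1)) :=
      (WeakDual.isCompact_closedBall (𝕜 := ℝ) (0 : StrongDual ℝ X) 1).image
        (continuous_pi fun i => WeakDual.eval_continuous (x i))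
    exact hcomp.isClosed
  -- hard inclusion
  have hhard : ∀ ε : ℝ, 0 < ε → convexBody x ⊆ (1 + ε) • S := by
    intro ε hε v hv
    set V : Submodule ℝ (Fin n → ℝ) := Submodule.span ℝ S with hVdef
    have hSV : S ⊆ (V : Set (Fin n → ℝ)) := Submodule.subset_span
    have hVclosed : IsClosed (V : Set (Fin n → ℝ)) := V.closed_of_finiteDimensional
    set S' : Set V := Subtype.val ⁻¹' S with hS'def
    have himg : Subtype.val '' S' = S := by
      rw [hS'def, Set.image_preimage_eq_inter_range, Subtype.range_coe]
      exact Set.inter_eq_left.2 hSV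
    have hS'conv : Convex ℝ S' := hSconv.linear_preimage V.subtype
    have h0' : (0 : V) ∈ S' := h0S
    have hspan' : Submodule.span ℝ S' = ⊤ := by
      apply Submodule.map_injective_of_injective V.injective_subtype
      rw [Submodule.map_span, Submodule.map_top, Submodule.range_subtype]
      show Submodule.span ℝ (Subtype.val '' S') = V
      rw [himg, hVdef]
    have hvec : vectorSpan ℝ S' = ⊤ := by
      rw [vectorSpan_def]
      rw [eq_top_iff, ← hspan']
      apply Submodule.span_mono
      intro a ha
      exact ⟨a, ha, 0, h0', by simp [vsub_eq_sub]⟩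
    have haff : affineSpan ℝ S' = ⊤ :=
      (AffineSubspace.affineSpan_eq_top_iff_vectorSpan_eq_top_of_nonempty ℝ V V ⟨0, h0'⟩).2 hvec
    have hint : (interior S').Nonempty :=
      (hS'conv.interior_nonempty_iff_affineSpan_eq_top).2 haff
    obtain ⟨q, hq⟩ := hint
    have h0int : (0 : V) ∈ interior S' := by
      have hq' : q ∈ S' := interior_subset hq
      have hnq : -q ∈ S' := by
        have : -(q : Fin n → ℝ) ∈ S := hSsymm _ hq'
        exact this
      have := hS'conv.combo_interior_closure_mem_interior hq (subset_closure hnq)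
        (a := (1:ℝ)/2) (b := (1:ℝ)/2) (by norm_num) (by norm_num) (by norm_num)
      simpa [smul_neg] using this
    have hclos : closure S' ⊆ AffineMap.homothety (0 : V) (1 + ε) '' interior S' :=
      hS'conv.closure_subset_image_homothety_interior_of_one_lt h0int (1 + ε)
        (by linarith)
    -- v lies in closure S, hence in V
    have hvcl : v ∈ closure S := hKsubcl hv
    have hvV : v ∈ V := closure_minimal hSV hVclosed hvcl
    have hvcl' : (⟨v, hvV⟩ : V) ∈ closure S' := by
      rw [hS'def, (Topology.IsEmbedding.subtypeVal).closure_eq_preimage_closure_image (Subtype.val ⁻¹' S)]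
      show v ∈ closure (Subtype.val '' S')
      rw [himg]; exact hvcl
    obtain ⟨w, hw, hweq⟩ := hclos hvcl'
    have hw' : w ∈ S' := interior_subset hw
    have hwS : (w : Fin n → ℝ) ∈ S := hw'
    have hveq : v = (1 + ε) • (w : Fin n → ℝ) := by
      have : AffineMap.homothety (0 : V) (1 + ε) w = (1 + ε) • w := by
        simp [AffineMap.homothety_apply, add_smul]
      rw [this] at hweq
      have := congrArg (Subtype.val) hweq
      simpa using this.symm
    exact ⟨(w : Fin n → ℝ), hwS, hveq.symm⟩
  -- assemble
  ext v
  simp only [Set.mem_iInter, Set.mem_Ioi]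
  constructor
  · intro hv ε hε
    exact hhard ε hε hv
  · intro h
    -- v/(1+ε) ∈ K for all ε > 0, and K is closed
    have hmem : ∀ k : ℕ, ((1 + ((k : ℝ) + 1)⁻¹)⁻¹ : ℝ) • v ∈ convexBody x := by
      intro k
      have hεk : (0 : ℝ) < ((k : ℝ) + 1)⁻¹ := by positivity
      obtain ⟨w, hwS, hwv⟩ := h _ hεk
      have hne : (1 + ((k : ℝ) + 1)⁻¹ : ℝ) ≠ 0 := by positivity
      have : ((1 + ((k : ℝ) + 1)⁻¹)⁻¹ : ℝ) • v = w := by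
        rw [← hwv, smul_smul, inv_mul_cancel₀ hne, one_smul]
      rw [this]
      exact hSK hwS
    have htend : Filter.Tendsto (fun k : ℕ => ((1 + ((k : ℝ) + 1)⁻¹)⁻¹ : ℝ) • v)
        Filter.atTop (nhds v) := by
      have h1 : Filter.Tendsto (fun k : ℕ => ((k : ℝ) + 1)⁻¹) Filter.atTop (nhds 0) :=
        tendsto_one_div_add_atTop_nhds_zero_nat.congr (by intro k; rw [one_div])
      have h2 : Filter.Tendsto (fun k : ℕ => ((1 + ((k : ℝ) + 1)⁻¹)⁻¹ : ℝ))
          Filter.atTop (nhds 1) := by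
        have := ((tendsto_const_nhds.add h1).inv₀ (by norm_num)
          : Filter.Tendsto (fun k : ℕ => ((1 : ℝ) + ((k : ℝ) + 1)⁻¹)⁻¹)
            Filter.atTop (nhds ((1 + 0 : ℝ)⁻¹)))
        simpa using this
      have := h2.smul_const v
      simpa using this
    have : v ∈ closure (convexBody x) :=
      mem_closure_of_tendsto htend (Filter.Eventually.of_forall hmem)
    rwa [hKclosed.closure_eq] at this
end

section
/- Let X, Y be real normed spaces, F ⊆ X and G ⊆ Y subspaces, and t : X × Y → ℝ a bilinear form such that |t(f,g)| ≤ C‖f‖_X‖g‖_Y for all (f,g) ∈ F × G. Then for every n ∈ ℤ₊ and all f ∈ Fⁿ, g ∈ Gⁿ, |t(f,g)| ≤ C·n^{3/2}·⟪f⟫_X · ⟪g⟫_Y, where t is extended to Xⁿ × Yⁿ by t(f,g) = ∑ᵢ t(fᵢ,gᵢ) and ⟪f⟫_X·⟪g⟫_Y denotes the Minkowski dot product of convex bodies identified with its right endpoint. -/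
open NormedSpace

/-- The Minkowski dot product `⟪f⟫_X · ⟪g⟫_Y` of the convex bodies of `f ∈ Xⁿ`
and `g ∈ Yⁿ`, identified with the right endpoint of the symmetric interval. -/
noncomputable def cbDot {X Y : Type*} [NormedAddCommGroup X] [NormedSpace ℝ X]
    [NormedAddCommGroup Y] [NormedSpace ℝ Y] {n : ℕ}
    (f : Fin n → X) (g : Fin n → Y) : ℝ :=
  sSup {t : ℝ | ∃ (φ : StrongDual ℝ X) (ψ : StrongDual ℝ Y),
    ‖φ‖ ≤ 1 ∧ ‖ψ‖ ≤ 1 ∧ t = ∑ i, φ (f i) * ψ (g i)}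

/-- Auerbach-type biorthogonal system for a finite-dimensional subspace `E` of a real
normed space: unit vectors `e k` in `E` and norm-`≤ 1` functionals `Φ k` on the whole
space, such that every element of `E` is reproduced as `∑ k, Φ k x • e k`. -/
theorem exists_auerbach {Z : Type*} [NormedAddCommGroup Z] [NormedSpace ℝ Z]
    (E : Submodule ℝ Z) [FiniteDimensional ℝ E] :
    ∃ (e : Fin (Module.finrank ℝ E) → Z) (Φ : Fin (Module.finrank ℝ E) → (Z →L[ℝ] ℝ)),
      (∀ k, e k ∈ E) ∧ (∀ k, ‖e k‖ ≤ 1) ∧ (∀ k, ‖Φ k‖ ≤ 1) ∧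
      ∀ x ∈ E, x = ∑ k, Φ k x • e k := by
  classical
  set d := Module.finrank ℝ E with hd
  let b : Module.Basis (Fin d) ℝ E := Module.finBasis ℝ E
  -- continuity of the determinant function
  have hcont : Continuous fun v : Fin d → E => b.det v := by
    simp only [Module.Basis.det_apply]
    refine Continuous.matrix_det (continuous_pi fun i => continuous_pi fun j => ?_)
    simp only [Module.Basis.toMatrix_apply]
    have h1 : Continuous fun x : E => (b.repr x) i :=
      LinearMap.continuous_of_finiteDimensional (b.coord i)
    exact h1.comp (continuous_apply j)
  -- the compact set of unit tuples
  let K : Set (Fin d → E) := Set.pi Set.univ fun _ => Metric.sphere (0 : E) 1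
  have hmemK : ∀ v : Fin d → E, v ∈ K ↔ ∀ k, ‖v k‖ = 1 := by
    intro v
    constructor
    · intro hv k
      have := hv k (Set.mem_univ k)
      simpa [mem_sphere_zero_iff_norm] using this
    · intro hv k _
      simpa [mem_sphere_zero_iff_norm] using hv k
  have hKc : IsCompact K := isCompact_univ_pi fun _ => isCompact_sphere 0 1
  have hv0 : (fun k => ‖b k‖⁻¹ • b k) ∈ K := by
    rw [hmemK]
    intro k
    have hbk : ‖b k‖ ≠ 0 := norm_ne_zero_iff.mpr (b.ne_zero k)
    rw [norm_smul, norm_inv, norm_norm, inv_mul_cancel₀ hbk]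
  obtain ⟨w, hwK, hwmax⟩ := hKc.exists_isMaxOn ⟨_, hv0⟩ (hcont.abs.continuousOn)
  have hwnorm : ∀ k, ‖w k‖ = 1 := (hmemK w).mp hwK
  -- the maximum is positive
  have hv0pos : 0 < |b.det fun k => ‖b k‖⁻¹ • b k| := by
    have := b.det.toMultilinearMap.map_smul_univ (fun k => ‖b k‖⁻¹) b
    have hdet : b.det (fun k => ‖b k‖⁻¹ • b k) = (∏ k, ‖b k‖⁻¹) • b.det b := this
    rw [hdet, Module.Basis.det_self, smul_eq_mul, mul_one]
    rw [abs_pos]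
    exact Finset.prod_ne_zero_iff.mpr fun k _ =>
      inv_ne_zero (norm_ne_zero_iff.mpr (b.ne_zero k))
  have hmpos : 0 < |b.det w| := lt_of_lt_of_le hv0pos (hwmax hv0)
  have hdetne : b.det w ≠ 0 := fun h => by simp [h] at hmpos
  -- the coordinate functionals
  let ℓ : Fin d → (E →ₗ[ℝ] ℝ) := fun k =>
    { toFun := fun z => (b.det w)⁻¹ * b.det (Function.update w k z)
      map_add' := fun x y => by
        show (b.det w)⁻¹ * b.det (Function.update w k (x + y)) =
          (b.det w)⁻¹ * b.det (Function.update w k x) +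
          (b.det w)⁻¹ * b.det (Function.update w k y)
        rw [AlternatingMap.map_update_add]; ring
      map_smul' := fun c x => by
        show (b.det w)⁻¹ * b.det (Function.update w k (c • x)) =
          c • ((b.det w)⁻¹ * b.det (Function.update w k x))
        rw [AlternatingMap.map_update_smul]; simp only [smul_eq_mul]; ring }
  have hℓ_apply : ∀ k z, ℓ k z = (b.det w)⁻¹ * b.det (Function.update w k z) := fun _ _ => rfl
  -- norm bound on the coordinate functionals
  have hℓle : ∀ k (z : E), |ℓ k z| ≤ ‖z‖ := by
    intro k z
    by_cases hz : z = 0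
    · simp [hz, hℓ_apply]
    · have hzn : ‖z‖ ≠ 0 := norm_ne_zero_iff.mpr hz
      have hu : ‖(‖z‖⁻¹ • z)‖ = 1 := by
        rw [norm_smul, norm_inv, norm_norm, inv_mul_cancel₀ hzn]
      have hmem : Function.update w k (‖z‖⁻¹ • z) ∈ K := by
        rw [hmemK]
        intro j
        rcases eq_or_ne j k with rfl | hjk
        · rw [Function.update_self]; exact hu
        · rw [Function.update_of_ne hjk]; exact hwnorm j
      have hle := hwmax hmem
      have hdet : b.det (Function.update w k z)
          = ‖z‖ * b.det (Function.update w k (‖z‖⁻¹ • z)) := by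
        have : z = ‖z‖ • (‖z‖⁻¹ • z) := by
          rw [smul_smul, mul_inv_cancel₀ hzn, one_smul]
        conv_lhs => rw [this]
        rw [AlternatingMap.map_update_smul, smul_eq_mul]
      rw [hℓ_apply, abs_mul, hdet, abs_mul, abs_norm, abs_inv]
      calc |b.det w|⁻¹ * (‖z‖ * |b.det (Function.update w k (‖z‖⁻¹ • z))|)
          ≤ |b.det w|⁻¹ * (‖z‖ * |b.det w|) := by
            apply mul_le_mul_of_nonneg_left _ (inv_nonneg.mpr (abs_nonneg _))
            exact mul_le_mul_of_nonneg_left hle (norm_nonneg z)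
        _ = ‖z‖ := by field_simp
  -- biorthogonality
  have hdelta : ∀ k j, ℓ k (w j) = if j = k then 1 else 0 := by
    intro k j
    rcases eq_or_ne j k with rfl | hjk
    · rw [hℓ_apply, Function.update_eq_self, if_pos rfl, inv_mul_cancel₀ hdetne]
    · rw [hℓ_apply, if_neg hjk, b.det.map_update_self _ (Ne.symm hjk), mul_zero]
  -- `w` is a basis, hence the reproducing formula
  have hunit : IsUnit (b.det w) := isUnit_iff_ne_zero.mpr hdetne
  obtain ⟨hli, hsp⟩ := (Module.Basis.is_basis_iff_det b).mpr hunit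
  let bw : Module.Basis (Fin d) ℝ E := Module.Basis.mk hli hsp.ge
  let P : E →ₗ[ℝ] E := ∑ k, (ℓ k).smulRight (w k)
  have hP : P = LinearMap.id := by
    apply bw.ext
    intro j
    have hbwj : bw j = w j := Module.Basis.mk_apply hli hsp.ge j
    simp only [P, LinearMap.coe_sum, Finset.sum_apply, LinearMap.smulRight_apply,
      LinearMap.id_coe, id_eq, hbwj, hdelta]
    simp [Finset.sum_ite_eq]
  have hrepE : ∀ z : E, z = ∑ k, ℓ k z • w k := by
    intro z
    have := LinearMap.ext_iff.mp hP z
    simpa [P, LinearMap.coe_sum, Finset.sum_apply] using this.symm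
  -- extend the functionals to the whole space
  have hext : ∀ k, ∃ g : Z →L[ℝ] ℝ,
      (∀ x : E, g x = LinearMap.toContinuousLinearMap (ℓ k) x) ∧
      ‖g‖ = ‖LinearMap.toContinuousLinearMap (ℓ k)‖ :=
    fun k => exists_extension_norm_eq E (LinearMap.toContinuousLinearMap (ℓ k))
  choose Φ hΦext hΦnorm using hext
  have hℓnorm : ∀ k, ‖LinearMap.toContinuousLinearMap (ℓ k)‖ ≤ 1 := by
    intro k
    apply ContinuousLinearMap.opNorm_le_bound _ zero_le_one
    intro z
    rw [one_mul]
    simpa [Real.norm_eq_abs] using hℓle k z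
  refine ⟨fun k => (w k : Z), Φ, fun k => (w k).2, fun k => le_of_eq (hwnorm k),
    fun k => (hΦnorm k).le.trans (hℓnorm k), ?_⟩
  intro x hx
  have hz := hrepE ⟨x, hx⟩
  have h1 : x = ((∑ k, ℓ k ⟨x, hx⟩ • w k : E) : Z) := by
    exact_mod_cast congrArg (Submodule.subtype E) hz
  conv_lhs => rw [h1]
  push_cast
  refine Finset.sum_congr rfl fun k _ => ?_
  have h2 : Φ k x = ℓ k ⟨x, hx⟩ := hΦext k ⟨x, hx⟩
  rw [h2]

/-- If a bilinear form satisfies `|t(f,g)| ≤ C ‖f‖ ‖g‖` on `F × G`, then for every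
`n ∈ ℤ₊` its extension to tuples satisfies
`|t(f,g)| ≤ C n^{3/2} ⟪f⟫_X · ⟪g⟫_Y` on `Fⁿ × Gⁿ`. -/
theorem stmt15 {X Y : Type*} [NormedAddCommGroup X] [NormedSpace ℝ X]
    [NormedAddCommGroup Y] [NormedSpace ℝ Y]
    (F : Submodule ℝ X) (G : Submodule ℝ Y)
    (t : X →ₗ[ℝ] Y →ₗ[ℝ] ℝ) (C : ℝ)
    (h : ∀ f ∈ F, ∀ g ∈ G, |t f g| ≤ C * ‖f‖ * ‖g‖) :
    ∀ n : ℕ, 0 < n → ∀ (f : Fin n → X) (g : Fin n → Y),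
      (∀ i, f i ∈ F) → (∀ i, g i ∈ G) →
      |∑ i, t (f i) (g i)| ≤ C * (n : ℝ) ^ ((3 : ℝ) / 2) * cbDot f g := by
  classical
  intro n hn f g hf hg
  set S : Set ℝ := {s : ℝ | ∃ (φ : StrongDual ℝ X) (ψ : StrongDual ℝ Y),
    ‖φ‖ ≤ 1 ∧ ‖ψ‖ ≤ 1 ∧ s = ∑ i, φ (f i) * ψ (g i)} with hS
  have hcb : cbDot f g = sSup S := rfl
  have h0S : (0 : ℝ) ∈ S := ⟨0, 0, by simp, by simp, by simp⟩
  have hSbdd : BddAbove S := by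
    refine ⟨∑ i, ‖f i‖ * ‖g i‖, ?_⟩
    rintro s ⟨φ, ψ, hφ, hψ, rfl⟩
    refine Finset.sum_le_sum fun i _ => ?_
    calc φ (f i) * ψ (g i) ≤ |φ (f i) * ψ (g i)| := le_abs_self _
      _ = ‖φ (f i)‖ * ‖ψ (g i)‖ := by rw [abs_mul]; rfl
      _ ≤ ‖f i‖ * ‖g i‖ := by
          refine mul_le_mul ?_ ?_ (norm_nonneg _) (norm_nonneg _)
          · simpa using φ.le_of_opNorm_le hφ (f i)
          · simpa using ψ.le_of_opNorm_le hψ (g i)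
  have hc0 : 0 ≤ cbDot f g := by rw [hcb]; exact le_csSup hSbdd h0S
  have hkey : ∀ (φ : StrongDual ℝ X) (ψ : StrongDual ℝ Y), ‖φ‖ ≤ 1 → ‖ψ‖ ≤ 1 →
      (∑ i, φ (f i) * ψ (g i)) ≤ cbDot f g := by
    intro φ ψ hφ hψ
    rw [hcb]
    exact le_csSup hSbdd ⟨φ, ψ, hφ, hψ, rfl⟩
  have hnorm : ∀ φ : StrongDual ℝ X, ‖φ‖ ≤ 1 → ‖∑ i, φ (f i) • g i‖ ≤ cbDot f g := by
    intro φ hφ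
    by_cases hy : (∑ i, φ (f i) • g i) = 0
    · rw [hy, norm_zero]; exact hc0
    · obtain ⟨ψ, hψ1, hψy⟩ := exists_dual_vector ℝ _ (norm_ne_zero_iff.mpr hy)
      have h1 : ‖∑ i, φ (f i) • g i‖ = ψ (∑ i, φ (f i) • g i) := by
        exact_mod_cast hψy.symm
      have h2 : ψ (∑ i, φ (f i) • g i) = ∑ i, φ (f i) * ψ (g i) := by
        rw [map_sum]
        exact Finset.sum_congr rfl fun i _ => by rw [map_smul, smul_eq_mul]
      rw [h1, h2]
      exact hkey φ ψ hφ (le_of_eq hψ1)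
  -- degenerate cases
  by_cases hfz : ∀ i, f i = 0
  · have hL : (∑ i, t (f i) (g i)) = 0 := by
      refine Finset.sum_eq_zero fun i _ => ?_
      rw [hfz i]; simp
    have hcz : cbDot f g = 0 := by
      refine le_antisymm ?_ hc0
      rw [hcb]
      refine csSup_le ⟨0, h0S⟩ ?_
      rintro s ⟨φ, ψ, hφ, hψ, rfl⟩
      refine le_of_eq (Finset.sum_eq_zero fun i _ => ?_)
      rw [hfz i]; simp
    rw [hL, hcz, mul_zero, abs_zero]
  by_cases hgz : ∀ i, g i = 0
  · have hL : (∑ i, t (f i) (g i)) = 0 := by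
      refine Finset.sum_eq_zero fun i _ => ?_
      rw [hgz i]; simp
    have hcz : cbDot f g = 0 := by
      refine le_antisymm ?_ hc0
      rw [hcb]
      refine csSup_le ⟨0, h0S⟩ ?_
      rintro s ⟨φ, ψ, hφ, hψ, rfl⟩
      refine le_of_eq (Finset.sum_eq_zero fun i _ => ?_)
      rw [hgz i]; simp
    rw [hL, hcz, mul_zero, abs_zero]
  push_neg at hfz hgz
  obtain ⟨i₀, hi₀⟩ := hfz
  obtain ⟨j₀, hj₀⟩ := hgz
  have hC : 0 ≤ C := by
    by_contra hC'
    push_neg at hC'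
    have h1 := h (f i₀) (hf i₀) (g j₀) (hg j₀)
    have h2 : C * ‖f i₀‖ * ‖g j₀‖ < 0 :=
      mul_neg_of_neg_of_pos
        (mul_neg_of_neg_of_pos hC' (norm_pos_iff.mpr hi₀)) (norm_pos_iff.mpr hj₀)
    exact absurd (lt_of_le_of_lt (le_trans (abs_nonneg _) h1) h2) (lt_irrefl 0)
  -- main case
  set E : Submodule ℝ X := Submodule.span ℝ (Set.range f) with hE
  haveI : FiniteDimensional ℝ E := FiniteDimensional.span_of_finite ℝ (Set.finite_range f)
  obtain ⟨e, Φ, heE, hen, hΦn, hrep⟩ := exists_auerbach E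
  have hdn : Module.finrank ℝ E ≤ n := by
    have h1 : Module.finrank ℝ E ≤ (Set.range f).toFinset.card :=
      finrank_span_le_card (Set.range f)
    have h2 : (Set.range f).toFinset.card ≤ n := by
      rw [Set.toFinset_range]
      exact (Finset.card_image_le).trans (by simp)
    exact h1.trans h2
  have heF : ∀ k, e k ∈ F := by
    intro k
    have : E ≤ F := by
      rw [hE, Submodule.span_le]
      rintro x ⟨i, rfl⟩
      exact hf i
    exact this (heE k)
  set y : Fin (Module.finrank ℝ E) → Y := fun k => ∑ i, Φ k (f i) • g i with hy
  have hyG : ∀ k, y k ∈ G :=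
    fun k => Submodule.sum_mem G fun i _ => Submodule.smul_mem G _ (hg i)
  have hyn : ∀ k, ‖y k‖ ≤ cbDot f g := fun k => hnorm (Φ k) (hΦn k)
  -- the algebraic identity
  have hsum : (∑ i, t (f i) (g i)) = ∑ k, t (e k) (y k) := by
    calc (∑ i, t (f i) (g i)) = ∑ i, ∑ k, Φ k (f i) * t (e k) (g i) := by
          refine Finset.sum_congr rfl fun i _ => ?_
          conv_lhs => rw [hrep (f i) (Submodule.subset_span (Set.mem_range_self i))]
          rw [map_sum]
          simp [LinearMap.sum_apply, map_smul, smul_eq_mul]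
      _ = ∑ k, ∑ i, Φ k (f i) * t (e k) (g i) := Finset.sum_comm
      _ = ∑ k, t (e k) (y k) := by
          refine Finset.sum_congr rfl fun k _ => ?_
          rw [hy]
          simp only [map_sum, map_smul, smul_eq_mul]
  have hterm : ∀ k, |t (e k) (y k)| ≤ C * cbDot f g := by
    intro k
    calc |t (e k) (y k)| ≤ C * ‖e k‖ * ‖y k‖ := h (e k) (heF k) (y k) (hyG k)
      _ ≤ C * 1 * ‖y k‖ := by
          refine mul_le_mul_of_nonneg_right ?_ (norm_nonneg _)
          exact mul_le_mul_of_nonneg_left (hen k) hC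
      _ = C * ‖y k‖ := by rw [mul_one]
      _ ≤ C * cbDot f g := mul_le_mul_of_nonneg_left (hyn k) hC
  have hmain : |∑ i, t (f i) (g i)| ≤ ((Module.finrank ℝ E : ℕ) : ℝ) * (C * cbDot f g) := by
    rw [hsum]
    calc |∑ k, t (e k) (y k)| ≤ ∑ k, |t (e k) (y k)| := Finset.abs_sum_le_sum_abs _ _
      _ ≤ ∑ _k : Fin (Module.finrank ℝ E), C * cbDot f g := Finset.sum_le_sum fun k _ => hterm k
      _ = ((Module.finrank ℝ E : ℕ) : ℝ) * (C * cbDot f g) := by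
          rw [Finset.sum_const, Finset.card_univ, Fintype.card_fin, nsmul_eq_mul]
  have hpow : ((Module.finrank ℝ E : ℕ) : ℝ) ≤ (n : ℝ) ^ ((3 : ℝ) / 2) := by
    have h1 : ((Module.finrank ℝ E : ℕ) : ℝ) ≤ (n : ℝ) := Nat.cast_le.mpr hdn
    have h2 : (1 : ℝ) ≤ (n : ℝ) := by exact_mod_cast hn
    calc ((Module.finrank ℝ E : ℕ) : ℝ) ≤ (n : ℝ) := h1
      _ = (n : ℝ) ^ (1 : ℝ) := (Real.rpow_one _).symm
      _ ≤ (n : ℝ) ^ ((3 : ℝ) / 2) :=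
          Real.rpow_le_rpow_of_exponent_le h2 (by norm_num)
  calc |∑ i, t (f i) (g i)| ≤ ((Module.finrank ℝ E : ℕ) : ℝ) * (C * cbDot f g) := hmain
    _ ≤ (n : ℝ) ^ ((3 : ℝ) / 2) * (C * cbDot f g) :=
        mul_le_mul_of_nonneg_right hpow (mul_nonneg hC hc0)
    _ = C * (n : ℝ) ^ ((3 : ℝ) / 2) * cbDot f g := by ring
end

section
/- Let X, Y be normed spaces, f ∈ Xⁿ, g ∈ Yⁿ. Suppose the John ellipsoid ℰ_f of the convex body ⟪f⟫_X ⊆ ℝⁿ is non-degenerate and satisfies ℰ_f ⊆ ⟪f⟫_X ⊆ √n·ℰ_f. Let R_f be the linear map with R_f ℰ_f equal to the closed Euclidean unit ball, and let (eᵢ) be an orthonormal basis of ℝⁿ. Setting fᵢ = R_f f · eᵢ ∈ X and gᵢ = R_f^{-⊤} g · eᵢ ∈ Y, one has ∑_{i=1}^n ‖fᵢ‖_X ‖gᵢ‖_Y ≤ n^{3/2} · (⟪f⟫_X · ⟪g⟫_Y). -/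
open NormedSpace Pointwise Matrix

/-- The convex body of `f ∈ Xⁿ`, as a subset of Euclidean space. -/
def convexBodyE {X : Type*} [NormedAddCommGroup X] [NormedSpace ℝ X] {n : ℕ}
    (f : Fin n → X) : Set (EuclideanSpace ℝ (Fin n)) :=
  {v | ∃ φ : StrongDual ℝ X, ‖φ‖ ≤ 1 ∧ ∀ i, v i = φ (f i)}

/-- A matrix `R` applied to a tuple `f ∈ Xⁿ`: `(Rf)ₖ = ∑ⱼ Rₖⱼ • fⱼ`. -/
noncomputable def matVec {X : Type*} [NormedAddCommGroup X] [NormedSpace ℝ X] {n : ℕ}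
    (R : Matrix (Fin n) (Fin n) ℝ) (f : Fin n → X) : Fin n → X :=
  fun k => ∑ j, R k j • f j

lemma aux_apply {X : Type*} [NormedAddCommGroup X] [NormedSpace ℝ X] {n : ℕ}
    (A : Matrix (Fin n) (Fin n) ℝ) (f : Fin n → X) (φ : StrongDual ℝ X) (c : Fin n → ℝ) :
    φ (∑ k, c k • matVec A f k) = c ⬝ᵥ (A *ᵥ fun j => φ (f j)) := by
  simp only [matVec, map_sum, _root_.map_smul, smul_eq_mul, dotProduct, Matrix.mulVec,
    Finset.mul_sum, mul_assoc]

example {n : ℕ} (A : Matrix (Fin n) (Fin n) ℝ) (x : EuclideanSpace ℝ (Fin n)) (k : Fin n) :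
    Matrix.toEuclideanLin A x k = (A *ᵥ fun j => x j) k := rfl

/-- John ellipsoid lemma: if the John ellipsoid `E` of `⟪f⟫_X` is non-degenerate,
`E ⊆ ⟪f⟫_X ⊆ √n·E`, and `R` maps `E` onto the closed unit ball, then with
`fᵢ = R f · eᵢ` and `gᵢ = R^{-⊤} g · eᵢ` one has
`∑ᵢ ‖fᵢ‖ ‖gᵢ‖ ≤ n^{3/2} ⟪f⟫_X · ⟪g⟫_Y`. -/
theorem stmt16 {X Y : Type*} [NormedAddCommGroup X] [NormedSpace ℝ X]
    [NormedAddCommGroup Y] [NormedSpace ℝ Y] {n : ℕ}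
    (f : Fin n → X) (g : Fin n → Y)
    (E : Set (EuclideanSpace ℝ (Fin n)))
    (R : Matrix (Fin n) (Fin n) ℝ) (hR : IsUnit R.det)
    (hRE : Matrix.toEuclideanLin R '' E = Metric.closedBall 0 1)
    (hE1 : E ⊆ convexBodyE f)
    (hE2 : convexBodyE f ⊆ Real.sqrt n • E)
    (b : OrthonormalBasis (Fin n) ℝ (EuclideanSpace ℝ (Fin n))) :
    ∑ i, ‖∑ k, b i k • matVec R f k‖ * ‖∑ k, b i k • matVec (R⁻¹)ᵀ g k‖ ≤
      (n : ℝ) ^ ((3 : ℝ) / 2) * cbDot f g := by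
  classical
  set S : Set ℝ := {t : ℝ | ∃ (φ : StrongDual ℝ X) (ψ : StrongDual ℝ Y),
    ‖φ‖ ≤ 1 ∧ ‖ψ‖ ≤ 1 ∧ t = ∑ i, φ (f i) * ψ (g i)} with hSdef
  have hcd : cbDot f g = sSup S := rfl
  have hbdd : BddAbove S := by
    refine ⟨∑ i, ‖f i‖ * ‖g i‖, ?_⟩
    rintro t ⟨φ, ψ, hφ, hψ, rfl⟩
    refine Finset.sum_le_sum fun i _ => ?_
    calc φ (f i) * ψ (g i) ≤ |φ (f i)| * |ψ (g i)| := by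
          exact le_trans (le_abs_self _) (by rw [abs_mul])
      _ ≤ ‖f i‖ * ‖g i‖ := by
          refine mul_le_mul ?_ ?_ (abs_nonneg _) (norm_nonneg _)
          · calc |φ (f i)| = ‖φ (f i)‖ := rfl
              _ ≤ ‖φ‖ * ‖f i‖ := φ.le_opNorm _
              _ ≤ 1 * ‖f i‖ := by gcongr
              _ = ‖f i‖ := one_mul _
          · calc |ψ (g i)| = ‖ψ (g i)‖ := rfl
              _ ≤ ‖ψ‖ * ‖g i‖ := ψ.le_opNorm _
              _ ≤ 1 * ‖g i‖ := by gcongr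
              _ = ‖g i‖ := one_mul _
  have hcb0 : (0 : ℝ) ≤ sSup S := by
    refine le_csSup hbdd ⟨0, 0, by simp, by simp, by simp⟩
  have hinner : ∀ x y : EuclideanSpace ℝ (Fin n), (inner ℝ x y : ℝ) = ∑ k, x k * y k := by
    intro x y
    simp [PiLp.inner_apply, RCLike.inner_apply, mul_comm]
  have hbnorm : ∀ i, ‖b i‖ = 1 := fun i => b.orthonormal.1 i
  -- Bound on the image of a dual element of X
  have hAnorm : ∀ φ : StrongDual ℝ X, ‖φ‖ ≤ 1 →
      ‖Matrix.toEuclideanLin R ((WithLp.equiv 2 _).symm fun j => φ (f j))‖ ≤ Real.sqrt n := by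
    intro φ hφ
    have hmem : ((WithLp.equiv 2 (Fin n → ℝ)).symm fun j => φ (f j)) ∈ convexBodyE f :=
      ⟨φ, hφ, fun i => rfl⟩
    obtain ⟨e, he, hwe⟩ := Set.mem_smul_set.mp (hE2 hmem)
    have hball : Matrix.toEuclideanLin R e ∈ Metric.closedBall (0 : EuclideanSpace ℝ (Fin n)) 1 :=
      hRE ▸ ⟨e, he, rfl⟩
    rw [mem_closedBall_zero_iff] at hball
    rw [← hwe, _root_.map_smul, norm_smul]
    calc ‖(Real.sqrt n : ℝ)‖ * ‖Matrix.toEuclideanLin R e‖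
        ≤ ‖(Real.sqrt n : ℝ)‖ * 1 := by gcongr
      _ = Real.sqrt n := by rw [mul_one, Real.norm_eq_abs, abs_of_nonneg (Real.sqrt_nonneg _)]
  -- Bound on ‖F i‖
  have hF : ∀ i, ‖∑ k, b i k • matVec R f k‖ ≤ Real.sqrt n := by
    intro i
    by_cases h : (∑ k, b i k • matVec R f k) = 0
    · rw [h, norm_zero]; exact Real.sqrt_nonneg _
    obtain ⟨φ, hφ1, hφx⟩ := exists_dual_vector ℝ _ (norm_ne_zero_iff.mpr h)
    have hφle : ‖φ‖ ≤ 1 := le_of_eq hφ1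
    have hφx' : φ (∑ k, b i k • matVec R f k) = ‖∑ k, b i k • matVec R f k‖ := by
      exact_mod_cast hφx
    rw [← hφx']
    have h2 : φ (∑ k, b i k • matVec R f k) =
        (inner ℝ (b i) (Matrix.toEuclideanLin R ((WithLp.equiv 2 _).symm fun j => φ (f j))) : ℝ) := by
      rw [aux_apply, hinner]
      rfl
    rw [h2]
    calc (inner ℝ (b i) (Matrix.toEuclideanLin R ((WithLp.equiv 2 _).symm fun j => φ (f j))) : ℝ)
        ≤ ‖b i‖ * ‖Matrix.toEuclideanLin R ((WithLp.equiv 2 _).symm fun j => φ (f j))‖ :=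
          real_inner_le_norm _ _
      _ ≤ 1 * Real.sqrt n := by
          rw [hbnorm i]
          simpa using hAnorm φ hφle
      _ = Real.sqrt n := one_mul _
  -- adjoint identity
  have key : ∀ (e w : Fin n → ℝ), (R *ᵥ e) ⬝ᵥ ((R⁻¹)ᵀ *ᵥ w) = e ⬝ᵥ w := by
    intro e w
    rw [Matrix.dotProduct_mulVec, Matrix.vecMul_transpose, Matrix.mulVec_mulVec,
      Matrix.nonsing_inv_mul R hR, Matrix.one_mulVec]
  -- Bound on ‖G i‖
  have hG : ∀ i, ‖∑ k, b i k • matVec (R⁻¹)ᵀ g k‖ ≤ sSup S := by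
    intro i
    by_cases h : (∑ k, b i k • matVec (R⁻¹)ᵀ g k) = 0
    · rw [h, norm_zero]; exact hcb0
    obtain ⟨ψ, hψ1, hψx⟩ := exists_dual_vector ℝ _ (norm_ne_zero_iff.mpr h)
    have hψle : ‖ψ‖ ≤ 1 := le_of_eq hψ1
    set w : Fin n → ℝ := fun j => ψ (g j) with hw
    set v : EuclideanSpace ℝ (Fin n) := (WithLp.equiv 2 (Fin n → ℝ)).symm ((R⁻¹)ᵀ *ᵥ w) with hv
    have h2 : ψ (∑ k, b i k • matVec (R⁻¹)ᵀ g k) = (inner ℝ (b i) v : ℝ) := by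
      rw [aux_apply, hinner]
      rfl
    have h3 : (inner ℝ (b i) v : ℝ) ≤ ‖v‖ := by
      calc (inner ℝ (b i) v : ℝ) ≤ ‖b i‖ * ‖v‖ := real_inner_le_norm _ _
        _ = ‖v‖ := by rw [hbnorm i, one_mul]
    have h4 : ‖v‖ ≤ sSup S := by
      by_cases hv0 : v = 0
      · rw [hv0, norm_zero]; exact hcb0
      set u : EuclideanSpace ℝ (Fin n) := ‖v‖⁻¹ • v with hu
      have hun : ‖u‖ = 1 := by
        rw [hu, norm_smul, norm_inv, norm_norm, inv_mul_cancel₀ (norm_ne_zero_iff.mpr hv0)]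
      have humem : u ∈ Metric.closedBall (0 : EuclideanSpace ℝ (Fin n)) 1 := by
        rw [mem_closedBall_zero_iff, hun]
      rw [← hRE] at humem
      obtain ⟨e, he, heu⟩ := humem
      obtain ⟨φ, hφ1, hφe⟩ := hE1 he
      have hval : (∑ j, φ (f j) * ψ (g j)) = ‖v‖ := by
        have h5 : (∑ j, φ (f j) * ψ (g j)) = (fun j => e j) ⬝ᵥ w := by
          simp only [dotProduct, hw]
          exact Finset.sum_congr rfl fun j _ => by rw [hφe j]
        have h6 : (fun j => e j) ⬝ᵥ w = (R *ᵥ fun j => e j) ⬝ᵥ ((R⁻¹)ᵀ *ᵥ w) := (key _ _).symm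
        have h7 : (R *ᵥ fun j => e j) ⬝ᵥ ((R⁻¹)ᵀ *ᵥ w) = (inner ℝ u v : ℝ) := by
          rw [hinner]
          rw [← heu]
          rfl
        have h8 : (inner ℝ u v : ℝ) = ‖v‖ := by
          have hnz : ‖v‖ ≠ 0 := norm_ne_zero_iff.mpr hv0
          rw [hu, real_inner_smul_left, real_inner_self_eq_norm_sq, sq, ← mul_assoc,
            inv_mul_cancel₀ hnz, one_mul]
        rw [h5, h6, h7, h8]
      exact hval ▸ le_csSup hbdd ⟨φ, ψ, hφ1, hψle, rfl⟩
    calc ‖∑ k, b i k • matVec (R⁻¹)ᵀ g k‖ = ψ (∑ k, b i k • matVec (R⁻¹)ᵀ g k) := by exact_mod_cast hψx.symm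
      _ = (inner ℝ (b i) v : ℝ) := h2
      _ ≤ ‖v‖ := h3
      _ ≤ sSup S := h4
  -- assemble
  rw [hcd]
  have hpow : ((n : ℝ)) ^ ((3 : ℝ) / 2) = (n : ℝ) * Real.sqrt n := by
    rw [Real.sqrt_eq_rpow, show (3 : ℝ) / 2 = 1 + 1 / 2 by norm_num,
      Real.rpow_add' (Nat.cast_nonneg n) (by norm_num), Real.rpow_one]
  calc ∑ i, ‖∑ k, b i k • matVec R f k‖ * ‖∑ k, b i k • matVec (R⁻¹)ᵀ g k‖
      ≤ ∑ _i : Fin n, Real.sqrt n * sSup S := by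
        refine Finset.sum_le_sum fun i _ => ?_
        exact mul_le_mul (hF i) (hG i) (norm_nonneg _) (Real.sqrt_nonneg _)
    _ = (n : ℝ) * (Real.sqrt n * sSup S) := by
        rw [Finset.sum_const, Finset.card_univ, Fintype.card_fin, nsmul_eq_mul]
    _ = (n : ℝ) ^ ((3 : ℝ) / 2) * sSup S := by rw [hpow]; ring
end
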